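/- arXiv:1903.05540 — 3 statements merged into one kernel-verified Lean document; each statement's English description precedes it below -/
import Mathlib

section
/- For every non-real quaternion q, there exists a non-real complex number z (viewed as a quaternion with zero j and k parts) such that the intersection of the similarity orbit θ(q) with the complex numbers is exactly {z, conj z}. -/
open Quaternion

theorem orbit_inter_complex (q : ℍ[ℝ]) (hq : q.im ≠ 0) :
    ∃ z : ℍ[ℝ], z.imJ = 0 ∧ z.imK = 0 ∧ z.imI ≠ 0 ∧
      ({x : ℍ[ℝ] | ∃ α : ℍ[ℝ], α ≠ 0 ∧ x = α⁻¹ * q * α} ∩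
        {x : ℍ[ℝ] | x.imJ = 0 ∧ x.imK = 0}) = {z, star z} := by
  have hbcd : q.imI ≠ 0 ∨ q.imJ ≠ 0 ∨ q.imK ≠ 0 := by
    by_contra h
    push_neg at h
    apply hq
    ext <;> simp [h.1, h.2.1, h.2.2]
  have hs : 0 < q.imI ^ 2 + q.imJ ^ 2 + q.imK ^ 2 := by
    rcases hbcd with h | h | h <;>
      nlinarith [sq_nonneg q.imI, sq_nonneg q.imJ, sq_nonneg q.imK,
        pow_two_pos_of_ne_zero h]
  set r : ℝ := Real.sqrt (q.imI ^ 2 + q.imJ ^ 2 + q.imK ^ 2) with hrdef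
  have hr : 0 < r := Real.sqrt_pos.mpr hs
  have hr2 : r ^ 2 = q.imI ^ 2 + q.imJ ^ 2 + q.imK ^ 2 := Real.sq_sqrt hs.le
  set z : ℍ[ℝ] := ⟨q.re, r, 0, 0⟩ with hzdef
  set j : ℍ[ℝ] := ⟨0, 0, 1, 0⟩ with hjdef
  have hstarz : star z = ⟨q.re, -r, 0, 0⟩ := by
    ext <;> simp only [Quaternion.re_mul, Quaternion.imI_mul, Quaternion.imJ_mul, Quaternion.imK_mul, Quaternion.re_star, Quaternion.imI_star, Quaternion.imJ_star, Quaternion.imK_star] <;> simp [hzdef]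
  have hjne : j ≠ 0 := by
    intro h
    rw [hjdef] at h
    simpa using congrArg QuaternionAlgebra.imJ h
  -- z * j = j * star z
  have hzj : z * j = j * star z := by
    ext <;> simp only [Quaternion.re_mul, Quaternion.imI_mul, Quaternion.imJ_mul, Quaternion.imK_mul, Quaternion.re_star, Quaternion.imI_star, Quaternion.imJ_star, Quaternion.imK_star] <;> simp [hzdef, hjdef] <;> ring
  have key : ∃ α : ℍ[ℝ], α ≠ 0 ∧ q * α = α * z := by
    by_cases hdeg : q.imJ = 0 ∧ q.imK = 0 ∧ q.imI = -r
    · refine ⟨j, hjne, ?_⟩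
      ext <;> simp only [Quaternion.re_mul, Quaternion.imI_mul, Quaternion.imJ_mul, Quaternion.imK_mul, Quaternion.re_star, Quaternion.imI_star, Quaternion.imJ_star, Quaternion.imK_star] <;> simp [hzdef, hjdef, hdeg.1, hdeg.2.1, hdeg.2.2] <;> ring
    · refine ⟨⟨0, q.imI + r, q.imJ, q.imK⟩, ?_, ?_⟩
      · intro h
        apply hdeg
        have h1 := congrArg QuaternionAlgebra.imI h
        have h2 := congrArg QuaternionAlgebra.imJ h
        have h3 := congrArg QuaternionAlgebra.imK h
        simp at h1 h2 h3
        exact ⟨h2, h3, by linarith⟩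
      · set a : ℍ[ℝ] := ⟨0, q.imI + r, q.imJ, q.imK⟩ with ha
        ext <;> simp only [Quaternion.re_mul, Quaternion.imI_mul, Quaternion.imJ_mul, Quaternion.imK_mul, Quaternion.re_star, Quaternion.imI_star, Quaternion.imJ_star, Quaternion.imK_star] <;> simp [hzdef, ha] <;> ring_nf <;> nlinarith [hr2]
  obtain ⟨α, hα, hqα⟩ := key
  have hzmem : z = α⁻¹ * q * α := by
    rw [mul_assoc, hqα, ← mul_assoc, inv_mul_cancel₀ hα, one_mul]
  have hwmem : star z = (α * j)⁻¹ * q * (α * j) := by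
    have hβ : q * (α * j) = (α * j) * star z := by
      rw [← mul_assoc, hqα, mul_assoc, hzj, ← mul_assoc]
    rw [mul_assoc, hβ, ← mul_assoc, inv_mul_cancel₀ (mul_ne_zero hα hjne), one_mul]
  refine ⟨z, rfl, rfl, by simpa [hzdef] using hr.ne', ?_⟩
  ext x
  simp only [Set.mem_inter_iff, Set.mem_setOf_eq, Set.mem_insert_iff, Set.mem_singleton_iff]
  constructor
  · rintro ⟨⟨β, hβ, hx⟩, hJ, hK⟩
    have hβx : β * x = q * β := by
      rw [hx, ← mul_assoc, ← mul_assoc, mul_inv_cancel₀ hβ, one_mul]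
    have hre : x.re = q.re := by
      have h2 : x = β⁻¹ * (q * β) := by rw [hx, mul_assoc]
      have h3 : ((q * β) * β⁻¹) = q := by rw [mul_assoc, mul_inv_cancel₀ hβ, mul_one]
      calc x.re = (β⁻¹ * (q * β)).re := by rw [← h2]
        _ = ((q * β) * β⁻¹).re := by simp only [Quaternion.re_mul]; ring
        _ = q.re := by rw [h3]
    have hn : Quaternion.normSq x = Quaternion.normSq q := by
      have h4 := congrArg Quaternion.normSq hβx
      rw [map_mul, map_mul, mul_comm (Quaternion.normSq q)] at h4
      have h5 : Quaternion.normSq β ≠ 0 := by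
        simpa [Quaternion.normSq_eq_zero] using hβ
      exact mul_left_cancel₀ h5 h4
    have himI : x.imI ^ 2 = r ^ 2 := by
      rw [Quaternion.normSq_def', Quaternion.normSq_def', hre, hJ, hK] at hn
      simp at hn
      linarith [hn, hr2]
    have hfac : (x.imI - r) * (x.imI + r) = 0 := by linear_combination himI
    rcases mul_eq_zero.mp hfac with h | h
    · left
      ext <;> simp [hzdef, hre, hJ, hK] <;> linarith
    · right
      rw [hstarz]
      ext <;> simp [hre, hJ, hK] <;> linarith
  · rintro (rfl | rfl)
    · exact ⟨⟨α, hα, hzmem⟩, rfl, rfl⟩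
    · exact ⟨⟨α * j, mul_ne_zero hα hjne, hwmem⟩, by rw [hstarz], by rw [hstarz]⟩
end

section
/- A symmetric quaternion matrix L = L₀ + i L₁ + j L₂ + k L₃ (with L₀, L₁, L₂, L₃ real symmetric matrices) is normal (L L* = L* L, where L* is the conjugate transpose) if and only if L₀ commutes with each of L₁, L₂, L₃. -/
open Quaternion Matrix

private lemma q_re_sum {α} (s : Finset α) (f : α → ℍ[ℝ]) :
    (∑ x ∈ s, f x).re = ∑ x ∈ s, (f x).re :=
  map_sum (QuaternionAlgebra.reₗ (-1 : ℝ) 0 (-1)) f s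

private lemma q_imI_sum {α} (s : Finset α) (f : α → ℍ[ℝ]) :
    (∑ x ∈ s, f x).imI = ∑ x ∈ s, (f x).imI :=
  map_sum (QuaternionAlgebra.imIₗ (-1 : ℝ) 0 (-1)) f s

private lemma q_imJ_sum {α} (s : Finset α) (f : α → ℍ[ℝ]) :
    (∑ x ∈ s, f x).imJ = ∑ x ∈ s, (f x).imJ :=
  map_sum (QuaternionAlgebra.imJₗ (-1 : ℝ) 0 (-1)) f s

private lemma q_imK_sum {α} (s : Finset α) (f : α → ℍ[ℝ]) :
    (∑ x ∈ s, f x).imK = ∑ x ∈ s, (f x).imK :=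
  map_sum (QuaternionAlgebra.imKₗ (-1 : ℝ) 0 (-1)) f s

private lemma q_star_aux (a b c d : ℝ) :
    star (⟨a, b, c, d⟩ : ℍ[ℝ]) = (2 : ℝ) • (⟨a, 0, 0, 0⟩ : ℍ[ℝ]) - ⟨a, b, c, d⟩ := by
  refine QuaternionAlgebra.ext ?_ ?_ ?_ ?_ <;> simp <;> ring

private lemma q_mul_r_aux (a b c d e : ℝ) :
    ((⟨a, b, c, d⟩ : ℍ[ℝ]) * ⟨e, 0, 0, 0⟩).re = a * e ∧
    ((⟨a, b, c, d⟩ : ℍ[ℝ]) * ⟨e, 0, 0, 0⟩).imI = b * e ∧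
    ((⟨a, b, c, d⟩ : ℍ[ℝ]) * ⟨e, 0, 0, 0⟩).imJ = c * e ∧
    ((⟨a, b, c, d⟩ : ℍ[ℝ]) * ⟨e, 0, 0, 0⟩).imK = d * e := by
  simp

private lemma q_r_mul_aux (a b c d e : ℝ) :
    ((⟨e, 0, 0, 0⟩ : ℍ[ℝ]) * ⟨a, b, c, d⟩).re = e * a ∧
    ((⟨e, 0, 0, 0⟩ : ℍ[ℝ]) * ⟨a, b, c, d⟩).imI = e * b ∧
    ((⟨e, 0, 0, 0⟩ : ℍ[ℝ]) * ⟨a, b, c, d⟩).imJ = e * c ∧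
    ((⟨e, 0, 0, 0⟩ : ℍ[ℝ]) * ⟨a, b, c, d⟩).imK = e * d := by
  simp

theorem normal_iff_commute (N : ℕ) (L : Matrix (Fin N) (Fin N) ℍ[ℝ])
    (L₀ L₁ L₂ L₃ : Matrix (Fin N) (Fin N) ℝ)
    (hdec : ∀ i j, L i j = ⟨L₀ i j, L₁ i j, L₂ i j, L₃ i j⟩)
    (hsym : L.transpose = L) :
    L * L.conjTranspose = L.conjTranspose * L ↔
      (L₀ * L₁ = L₁ * L₀ ∧ L₀ * L₂ = L₂ * L₀ ∧ L₀ * L₃ = L₃ * L₀) := by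
  have hsym' : ∀ i j, L j i = L i j := fun i j => congrFun (congrFun hsym i) j
  set M₀ : Matrix (Fin N) (Fin N) ℍ[ℝ] := L₀.map (algebraMap ℝ ℍ[ℝ]) with hM₀
  have amap : ∀ s : ℝ, (algebraMap ℝ ℍ[ℝ]) s = (⟨s, 0, 0, 0⟩ : ℍ[ℝ]) := fun _ => rfl
  have hstar : L.conjTranspose = (2 : ℝ) • M₀ - L := by
    refine Matrix.ext fun i j => ?_
    rw [Matrix.conjTranspose_apply, hsym', hdec i j]
    show star _ = (2 : ℝ) • (M₀ i j) - L i j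
    rw [hM₀, Matrix.map_apply, hdec i j, amap]
    exact q_star_aux _ _ _ _
  have key1 : (L * L.conjTranspose = L.conjTranspose * L) ↔ L * M₀ = M₀ * L := by
    rw [hstar, mul_sub, sub_mul, mul_smul_comm, smul_mul_assoc, sub_left_inj]
    constructor
    · intro h
      have h2 := congrArg (fun A => (2 : ℝ)⁻¹ • A) h
      simpa [smul_smul] using h2
    · intro h; rw [h]
  have hLM : ∀ i j, (L * M₀) i j =
      ⟨(L₀ * L₀) i j, (L₁ * L₀) i j, (L₂ * L₀) i j, (L₃ * L₀) i j⟩ := by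
    intro i j
    rw [Matrix.mul_apply]
    refine QuaternionAlgebra.ext ?_ ?_ ?_ ?_
    · rw [q_re_sum, Matrix.mul_apply]
      exact Finset.sum_congr rfl fun r _ => by
        rw [hM₀, Matrix.map_apply, hdec, amap]
        exact (q_mul_r_aux _ _ _ _ _).1
    · rw [q_imI_sum, Matrix.mul_apply]
      exact Finset.sum_congr rfl fun r _ => by
        rw [hM₀, Matrix.map_apply, hdec, amap]
        exact (q_mul_r_aux _ _ _ _ _).2.1
    · rw [q_imJ_sum, Matrix.mul_apply]
      exact Finset.sum_congr rfl fun r _ => by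
        rw [hM₀, Matrix.map_apply, hdec, amap]
        exact (q_mul_r_aux _ _ _ _ _).2.2.1
    · rw [q_imK_sum, Matrix.mul_apply]
      exact Finset.sum_congr rfl fun r _ => by
        rw [hM₀, Matrix.map_apply, hdec, amap]
        exact (q_mul_r_aux _ _ _ _ _).2.2.2
  have hML : ∀ i j, (M₀ * L) i j =
      ⟨(L₀ * L₀) i j, (L₀ * L₁) i j, (L₀ * L₂) i j, (L₀ * L₃) i j⟩ := by
    intro i j
    rw [Matrix.mul_apply]
    refine QuaternionAlgebra.ext ?_ ?_ ?_ ?_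
    · rw [q_re_sum, Matrix.mul_apply]
      exact Finset.sum_congr rfl fun r _ => by
        rw [hM₀, Matrix.map_apply, hdec, amap]
        exact (q_r_mul_aux _ _ _ _ _).1
    · rw [q_imI_sum, Matrix.mul_apply]
      exact Finset.sum_congr rfl fun r _ => by
        rw [hM₀, Matrix.map_apply, hdec, amap]
        exact (q_r_mul_aux _ _ _ _ _).2.1
    · rw [q_imJ_sum, Matrix.mul_apply]
      exact Finset.sum_congr rfl fun r _ => by
        rw [hM₀, Matrix.map_apply, hdec, amap]
        exact (q_r_mul_aux _ _ _ _ _).2.2.1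
    · rw [q_imK_sum, Matrix.mul_apply]
      exact Finset.sum_congr rfl fun r _ => by
        rw [hM₀, Matrix.map_apply, hdec, amap]
        exact (q_r_mul_aux _ _ _ _ _).2.2.2
  rw [key1]
  constructor
  · intro h
    have hcomp : ∀ i j,
        (L₁ * L₀) i j = (L₀ * L₁) i j ∧
        (L₂ * L₀) i j = (L₀ * L₂) i j ∧ (L₃ * L₀) i j = (L₀ * L₃) i j := by
      intro i j
      have := (hLM i j).symm.trans ((congrFun (congrFun h i) j).trans (hML i j))
      exact ⟨congrArg QuaternionAlgebra.imI this, congrArg QuaternionAlgebra.imJ this,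
        congrArg QuaternionAlgebra.imK this⟩
    exact ⟨Matrix.ext fun i j => ((hcomp i j).1).symm,
      Matrix.ext fun i j => ((hcomp i j).2.1).symm,
      Matrix.ext fun i j => ((hcomp i j).2.2).symm⟩
  · rintro ⟨h1, h2, h3⟩
    refine Matrix.ext fun i j => ?_
    rw [hLM, hML, ← h1, ← h2, ← h3]
end

section
/- If a normal right-linear operator T on a finite-dimensional right quaternion Hilbert space has eigenvectors u, v with T u = u λ and T v = v μ, where λ and μ are not similar quaternions (μ ∉ θ(λ)), then ⟨u, v⟩ = 0. -/
open Quaternion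

/-- The quaternionic inner product on `ℍⁿ`, conjugate-linear in the first slot and
right `ℍ`-linear in the second. -/
noncomputable def qinner {n : ℕ} (u v : Fin n → ℍ[ℝ]) : ℍ[ℝ] := ∑ i, star (u i) * v i

lemma qinner_star {n : ℕ} (u v : Fin n → ℍ[ℝ]) : star (qinner u v) = qinner v u := by
  simp [qinner, star_sum, mul_comm]

lemma qinner_smul_left {n : ℕ} (u v : Fin n → ℍ[ℝ]) (a : ℍ[ℝ]) :
    qinner (fun i => u i * a) v = star a * qinner u v := by
  simp [qinner, Finset.mul_sum, mul_assoc]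

lemma qinner_smul_right {n : ℕ} (u v : Fin n → ℍ[ℝ]) (a : ℍ[ℝ]) :
    qinner u (fun i => v i * a) = qinner u v * a := by
  simp [qinner, Finset.sum_mul, mul_assoc]

lemma qinner_self_coe {n : ℕ} (w : Fin n → ℍ[ℝ]) :
    qinner w w = ((∑ i, normSq (w i) : ℝ) : ℍ[ℝ]) := by
  have h1 : ((∑ i, normSq (w i) : ℝ) : ℍ[ℝ]) = ∑ i, ((normSq (w i) : ℝ) : ℍ[ℝ]) :=
    map_sum (algebraMap ℝ ℍ[ℝ]) (fun i => normSq (w i)) Finset.univ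
  rw [h1, qinner]
  refine Finset.sum_congr rfl fun i _ => ?_
  exact Quaternion.star_mul_self (w i)

lemma qinner_self_eq_zero {n : ℕ} (w : Fin n → ℍ[ℝ]) (h : qinner w w = 0) : w = 0 := by
  rw [qinner_self_coe] at h
  have hsum' : (∑ i, normSq (w i) : ℝ) = 0 :=
    Quaternion.coe_injective (by rw [h]; simp)
  have hall := (Finset.sum_eq_zero_iff_of_nonneg
    (fun i _ => normSq_nonneg (a := w i))).mp hsum'
  funext i
  exact normSq_eq_zero.mp (hall i (Finset.mem_univ i))

lemma key_identity (s nm : ℝ) (mu : ℍ[ℝ]) (h1 : star mu * mu = ((nm : ℝ) : ℍ[ℝ]))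
    (h2 : mu * star mu = ((nm : ℝ) : ℍ[ℝ])) :
    star mu * ((s : ℝ) : ℍ[ℝ]) * mu - ((s : ℝ) : ℍ[ℝ]) * mu * star mu
      - mu * (star mu * ((s : ℝ) : ℍ[ℝ])) + mu * ((s : ℝ) : ℍ[ℝ]) * star mu = 0 := by
  have c : ∀ x : ℍ[ℝ], ((s : ℝ) : ℍ[ℝ]) * x = x * ((s : ℝ) : ℍ[ℝ]) :=
    fun x => (Quaternion.coe_commute s x).eq
  have t1 : star mu * ((s : ℝ) : ℍ[ℝ]) * mu = ((s * nm : ℝ) : ℍ[ℝ]) := by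
    rw [mul_assoc, c mu, ← mul_assoc, h1, ← Quaternion.coe_mul]
    exact congrArg _ (mul_comm nm s)
  have t2 : ((s : ℝ) : ℍ[ℝ]) * mu * star mu = ((s * nm : ℝ) : ℍ[ℝ]) := by
    rw [mul_assoc, h2, ← Quaternion.coe_mul]
  have t3 : mu * (star mu * ((s : ℝ) : ℍ[ℝ])) = ((s * nm : ℝ) : ℍ[ℝ]) := by
    rw [← mul_assoc, h2, ← Quaternion.coe_mul]
    exact congrArg _ (mul_comm nm s)
  have t4 : mu * ((s : ℝ) : ℍ[ℝ]) * star mu = ((s * nm : ℝ) : ℍ[ℝ]) := by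
    rw [mul_assoc, c (star mu), ← mul_assoc, h2, ← Quaternion.coe_mul]
    exact congrArg _ (mul_comm nm s)
  rw [t1, t2, t3, t4]
  abel

theorem eigenvectors_of_nonsimilar_eigenvalues_orthogonal (n : ℕ)
    (T Tadj : (Fin n → ℍ[ℝ]) → (Fin n → ℍ[ℝ]))
    (hadd : ∀ u v, T (u + v) = T u + T v)
    (hsmul : ∀ u (α : ℍ[ℝ]), T (fun i => u i * α) = fun i => T u i * α)
    (hadj : ∀ u v, qinner (T u) v = qinner u (Tadj v))
    (hnormal : ∀ u, T (Tadj u) = Tadj (T u))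
    (u v : Fin n → ℍ[ℝ]) (hu : u ≠ 0) (hv : v ≠ 0) (lam mu : ℍ[ℝ])
    (hTu : T u = fun i => u i * lam) (hTv : T v = fun i => v i * mu)
    (hnotsim : ∀ α : ℍ[ℝ], α ≠ 0 → mu ≠ α⁻¹ * lam * α) :
    qinner u v = 0 := by
  -- adjoint acts on the left too
  have hadj' : ∀ x y, qinner (Tadj x) y = qinner x (T y) := by
    intro x y
    have h := congrArg star (hadj y x)
    rw [qinner_star, qinner_star] at h
    exact h.symm
  set s : ℝ := ∑ i, normSq (v i) with hs
  have hSr : qinner v v = ((s : ℝ) : ℍ[ℝ]) := qinner_self_coe v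
  have hmm1 : star mu * mu = ((normSq mu : ℝ) : ℍ[ℝ]) := by
    exact_mod_cast Quaternion.star_mul_self mu
  have hmm2 : mu * star mu = ((normSq mu : ℝ) : ℍ[ℝ]) := by
    exact_mod_cast Quaternion.self_mul_star mu
  -- the four pieces
  have hAA : qinner (Tadj v) (Tadj v) = star mu * ((s : ℝ) : ℍ[ℝ]) * mu :=
    calc qinner (Tadj v) (Tadj v) = qinner v (T (Tadj v)) := hadj' v (Tadj v)
      _ = qinner v (Tadj (T v)) := by rw [hnormal]
      _ = qinner (T v) (T v) := (hadj v (T v)).symm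
      _ = qinner (fun i => v i * mu) (fun i => v i * mu) := by rw [hTv]
      _ = star mu * ((s : ℝ) : ℍ[ℝ]) * mu := by
          rw [qinner_smul_left, qinner_smul_right, hSr, mul_assoc]
  have hAv : qinner (Tadj v) (fun i => v i * star mu)
      = ((s : ℝ) : ℍ[ℝ]) * mu * star mu := by
    rw [qinner_smul_right, hadj' v v, hTv, qinner_smul_right, hSr]
  have hvA : qinner (fun i => v i * star mu) (Tadj v)
      = mu * (star mu * ((s : ℝ) : ℍ[ℝ])) := by
    rw [qinner_smul_left, star_star, ← hadj, hTv, qinner_smul_left, hSr]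
  have hvv : qinner (fun i => v i * star mu) (fun i => v i * star mu)
      = mu * ((s : ℝ) : ℍ[ℝ]) * star mu := by
    rw [qinner_smul_left, qinner_smul_right, star_star, hSr, mul_assoc]
  have hexp : qinner (fun i => Tadj v i - v i * star mu) (fun i => Tadj v i - v i * star mu)
      = qinner (Tadj v) (Tadj v) - qinner (Tadj v) (fun i => v i * star mu)
        - qinner (fun i => v i * star mu) (Tadj v)
        + qinner (fun i => v i * star mu) (fun i => v i * star mu) := by
    simp only [qinner, star_sub, sub_mul, mul_sub, Finset.sum_sub_distrib]
    abel
  have hw : (fun i => Tadj v i - v i * star mu) = 0 := by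
    apply qinner_self_eq_zero
    rw [hexp, hAA, hAv, hvA, hvv]
    exact key_identity s (normSq mu) mu hmm1 hmm2
  have hTadjv : Tadj v = fun i => v i * star mu := by
    funext i
    have h := congrFun hw i
    simp only [Pi.zero_apply, sub_eq_zero] at h
    exact h
  -- main chain
  have hchain : star lam * qinner u v = qinner u v * star mu := by
    have h1 : qinner (T u) v = star lam * qinner u v := by rw [hTu, qinner_smul_left]
    have h2 : qinner (T u) v = qinner u v * star mu := by
      rw [hadj, hTadjv, qinner_smul_right]
    rw [← h1, h2]
  by_contra hq0
  have hsq : star (qinner u v) ≠ 0 := by simpa using hq0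
  have hkey : mu * star (qinner u v) = star (qinner u v) * lam := by
    have h := congrArg star hchain
    rw [star_mul, star_mul, star_star, star_star] at h
    exact h.symm
  have hfin : mu = star (qinner u v) * lam * (star (qinner u v))⁻¹ := by
    rw [eq_mul_inv_iff_mul_eq₀ hsq]; exact hkey
  exact hnotsim (star (qinner u v))⁻¹ (inv_ne_zero hsq) (by rw [inv_inv]; exact hfin)
end
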